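/- arXiv:2409.06588 — 2 statements merged into one kernel-verified Lean document; each statement's English description precedes it below -/
import Mathlib

section
/- In the double-estimator Obs_D(G), for every observation α ∈ H_a(L(G)), the reached state satisfies f_D(α) = { f(s) : s ∈ L(G), H_a(s) = α }, where f is the transition function of the knowledge recognizer T_o. -/
/-- The knowledge recognizer T_o, viewed as an automaton with partial
transition function over state space Q and event set Σ (its language
coincides with L(G)). -/
structure PDFA (Q E : Type*) where
  step : Q → E → Option Q
  init : Q

def PDFA.runFrom {Q E : Type*} (T : PDFA Q E) (q : Q) (s : List E) : Option Q :=
  s.foldl (fun oq e => oq.bind fun q' => T.step q' e) (some q)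

def PDFA.run {Q E : Type*} (T : PDFA Q E) (s : List E) : Option Q :=
  T.runFrom T.init s

def PDFA.lang {Q E : Type*} (T : PDFA Q E) : Set (List E) :=
  {s | (T.run s).isSome}

def obs {E O : Type*} (H : E → Option O) (s : List E) : List O := s.filterMap H

/-- Transition function of the double-estimator:
f_D(q_D, H_a(σ)) = {f(q, w) : q ∈ q_D, H_a(w) = H_a(σ)}. -/
def fD {Q E O : Type*} (T : PDFA Q E) (Ha : E → Option O)
    (qD : Set Q) (o : O) : Set Q :=
  {q' | ∃ q ∈ qD, ∃ w : List E, obs Ha w = [o] ∧ T.runFrom q w = some q'}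

/-- Initial state q_{0,D} = {f(w) : w ∈ Σ_ua*}. -/
def fD0 {Q E O : Type*} (T : PDFA Q E) (Ha : E → Option O) : Set Q :=
  {q | ∃ w : List E, obs Ha w = [] ∧ T.run w = some q}

/-- Extended transition function of the double-estimator on observations. -/
def fDrun {Q E O : Type*} (T : PDFA Q E) (Ha : E → Option O) (α : List O) : Set Q :=
  α.foldl (fD T Ha) (fD0 T Ha)

namespace PDFA

variable {Q E : Type*} (T : PDFA Q E)

theorem foldl_step_none (w : List E) :
    w.foldl (fun oq e => oq.bind fun q' => T.step q' e) none = none := by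
  induction w with
  | nil => rfl
  | cons _ _ ih => exact ih

theorem runFrom_append (q : Q) (s w : List E) :
    T.runFrom q (s ++ w) = (T.runFrom q s).bind fun q' => T.runFrom q' w := by
  rw [runFrom, List.foldl_append]
  change List.foldl _ (T.runFrom q s) w = _
  cases T.runFrom q s with
  | none => exact T.foldl_step_none w
  | some _ => rfl

theorem run_append_eq_some_iff (s w : List E) (q' : Q) :
    T.run (s ++ w) = some q' ↔ ∃ q, T.run s = some q ∧ T.runFrom q w = some q' := by
  rw [run, runFrom_append, Option.bind_eq_some_iff, run]

theorem mem_lang_of_run_eq_some {s : List E} {q : Q} (h : T.run s = some q) : s ∈ T.lang := by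
  simp [lang, h]

end PDFA

section DoubleEstimator

variable {Q E O : Type*} (T : PDFA Q E) (Ha : E → Option O)

theorem fDrun_append_singleton (α : List O) (o : O) :
    fDrun T Ha (α ++ [o]) = fD T Ha (fDrun T Ha α) o :=
  List.foldl_concat _ _ _ _

/-- The words observed as `α ++ [o]` are exactly the concatenations `u ++ v` with `u` observed
as `α` and `v` observed as `[o]`, which is the shape of the transition `fD`. -/
theorem fDrun_eq_setOf_run (α : List O) :
    fDrun T Ha α = {q | ∃ s, obs Ha s = α ∧ T.run s = some q} := by
  induction α using List.reverseRecOn with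
  | nil => rfl
  | append_singleton α o ih =>
    rw [fDrun_append_singleton, ih]
    ext q'
    constructor
    · rintro ⟨q, ⟨u, hu, hq⟩, v, hv, hq'⟩
      refine ⟨u ++ v, ?_, (T.run_append_eq_some_iff u v q').2 ⟨q, hq, hq'⟩⟩
      rw [obs, List.filterMap_append]
      exact congrArg₂ _ hu hv
    · rintro ⟨s, hs, hq'⟩
      obtain ⟨u, v, rfl, hu, hv⟩ := List.filterMap_eq_append_iff.1 hs
      obtain ⟨q, hq, hq'⟩ := (T.run_append_eq_some_iff u v q').1 hq'
      exact ⟨q, ⟨u, hu, hq⟩, v, hv, hq'⟩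

end DoubleEstimator

/-- For every observation α ∈ H_a(L(G)),
f_D(α) = {f(s) : s ∈ L(G), H_a(s) = α}. -/
theorem stmt_9 {Q E O : Type*} (T : PDFA Q E) (Ha : E → Option O) :
    ∀ α : List O, (∃ s ∈ T.lang, obs Ha s = α) →
      fDrun T Ha α = {q | ∃ s ∈ T.lang, obs Ha s = α ∧ T.run s = some q} := by
  intro α _
  rw [fDrun_eq_setOf_run]
  ext q
  exact ⟨fun ⟨s, hs, hq⟩ => ⟨s, T.mem_lang_of_run_eq_some hq, hs, hq⟩,
    fun ⟨s, _, hs, hq⟩ => ⟨s, hs, hq⟩⟩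
end

section
/- In the twin-estimator V of G, (i) every string s_V = (s₁, s₂) ∈ L(V) projects to a pair of strings s₁, s₂ ∈ L(G) with H_a(s₁) = H_a(s₂); and (ii) conversely, for any s₁, s₂ ∈ L(G) with H_a(s₁) = H_a(s₂), there exists an interleaving s_V ∈ L(V) whose projections are s₁ and s₂. -/
/-- Step of one component, where `none` (= ε) means staying put. -/
def optStep {Q E : Type*} (T : PDFA Q E) (q : Q) (e : Option E) : Option Q :=
  e.elim (some q) (T.step q)

/-- Transition function of the twin-estimator:
f_V((q₁,q₂),(σ₁,σ₂)) = (f(q₁,σ₁), f(q₂,σ₂)). -/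
def twinStep {Q E : Type*} (T : PDFA Q E) (q : Q × Q) (ev : Option E × Option E) :
    Option (Q × Q) :=
  (optStep T q.1 ev.1).bind fun q1' => (optStep T q.2 ev.2).map fun q2' => (q1', q2')

/-- Run of the twin-estimator from the initial state (q₀, q₀). -/
def twinRun {Q E : Type*} (T : PDFA Q E) (sV : List (Option E × Option E)) :
    Option (Q × Q) :=
  sV.foldl (fun oq ev => oq.bind fun q => twinStep T q ev) (some (T.init, T.init))

/-- The event set Σ_V = Σ_V^a ∪ Σ_V^{ua} of the twin-estimator. -/
def twinEvents {E O : Type*} (Ha : E → Option O) : Set (Option E × Option E) :=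
  {ev | (∃ σ1 σ2 : E, ev = (some σ1, some σ2) ∧ (Ha σ1).isSome ∧ Ha σ1 = Ha σ2) ∨
        (∃ σ : E, ev = (some σ, none) ∧ Ha σ = none) ∨
        (∃ σ : E, ev = (none, some σ) ∧ Ha σ = none)}

/-
The twin-estimator runs two copies of the recognizer side by side, so a run of `V` on `sV`
is exactly a pair of runs of `T_o` on the two projections of `sV`; and every twin event has
the same observation in both components. For (ii) one interleaves `s₁` and `s₂` greedily:
unobservable events are emitted alone, and the next observable events of both strings, which
carry the same observation, are emitted together.
-/

/-- `twinRun T sV` is definitionally `T.twin.run sV`. -/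
def PDFA.twin {Q E : Type*} (T : PDFA Q E) : PDFA (Q × Q) (Option E × Option E) where
  step := twinStep T
  init := (T.init, T.init)

namespace PDFA

variable {Q E : Type*} (T : PDFA Q E)

lemma runFrom_none_foldl (s : List E) :
    s.foldl (fun oq e => oq.bind fun q' => T.step q' e) none = none := by
  induction s with
  | nil => rfl
  | cons e s ih => simpa using ih

lemma runFrom_cons (q : Q) (e : E) (s : List E) :
    T.runFrom q (e :: s) = (T.step q e).bind fun q' => T.runFrom q' s := by
  cases h : T.step q e <;> simp [runFrom, h, runFrom_none_foldl]

lemma runFrom_filterMap_cons {A : Type*} (f : A → Option E) (q : Q) (a : A) (s : List A) :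
    T.runFrom q ((a :: s).filterMap f) =
      (optStep T q (f a)).bind fun q' => T.runFrom q' (s.filterMap f) := by
  cases h : f a <;> simp [h, optStep, runFrom_cons]

lemma twin_runFrom (sV : List (Option E × Option E)) (q₁ q₂ : Q) :
    T.twin.runFrom (q₁, q₂) sV =
      (T.runFrom q₁ (sV.filterMap Prod.fst)).bind fun p₁ =>
        (T.runFrom q₂ (sV.filterMap Prod.snd)).map fun p₂ => (p₁, p₂) := by
  induction sV generalizing q₁ q₂ with
  | nil => rfl
  | cons ev sV ih =>
    simp only [runFrom_cons, runFrom_filterMap_cons]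
    change ((twinStep T (q₁, q₂) ev).bind fun q' => T.twin.runFrom q' sV) = _
    cases h₁ : optStep T q₁ ev.1 <;> cases h₂ : optStep T q₂ ev.2 <;> simp [twinStep, *]

end PDFA

lemma twinRun_isSome_iff {Q E : Type*} (T : PDFA Q E) (sV : List (Option E × Option E)) :
    (twinRun T sV).isSome ↔ sV.filterMap Prod.fst ∈ T.lang ∧ sV.filterMap Prod.snd ∈ T.lang := by
  change (T.twin.runFrom (T.init, T.init) sV).isSome ↔ _
  rw [T.twin_runFrom]
  simp only [PDFA.lang, PDFA.run, Set.mem_ofPred_eq]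
  cases T.runFrom T.init (sV.filterMap Prod.fst) <;>
    cases T.runFrom T.init (sV.filterMap Prod.snd) <;> simp

section Observation

variable {E O : Type*} (Ha : E → Option O)

lemma bind_fst_eq_bind_snd_of_mem_twinEvents {ev : Option E × Option E}
    (hev : ev ∈ twinEvents Ha) : ev.1.bind Ha = ev.2.bind Ha := by
  rcases hev with ⟨σ₁, σ₂, rfl, -, h⟩ | ⟨σ, rfl, h⟩ | ⟨σ, rfl, h⟩ <;> simp [h]

lemma obs_filterMap_fst_eq_snd {sV : List (Option E × Option E)}
    (hsV : ∀ ev ∈ sV, ev ∈ twinEvents Ha) :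
    obs Ha (sV.filterMap Prod.fst) = obs Ha (sV.filterMap Prod.snd) := by
  simp only [obs, List.filterMap_filterMap]
  exact List.filterMap_congr fun ev hev => bind_fst_eq_bind_snd_of_mem_twinEvents Ha (hsV ev hev)

def TwinInterleaving (sV : List (Option E × Option E)) (s₁ s₂ : List E) : Prop :=
  (∀ ev ∈ sV, ev ∈ twinEvents Ha) ∧ sV.filterMap Prod.fst = s₁ ∧ sV.filterMap Prod.snd = s₂

namespace TwinInterleaving

variable {Ha} {sV : List (Option E × Option E)} {s₁ s₂ : List E}

lemma nil : TwinInterleaving Ha [] [] [] := ⟨by simp, rfl, rfl⟩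

lemma cons_left {a : E} (ha : Ha a = none) (h : TwinInterleaving Ha sV s₁ s₂) :
    TwinInterleaving Ha ((some a, none) :: sV) (a :: s₁) s₂ := by
  obtain ⟨hev, rfl, rfl⟩ := h
  exact ⟨by simpa [twinEvents, ha] using hev, rfl, rfl⟩

lemma cons_right {b : E} (hb : Ha b = none) (h : TwinInterleaving Ha sV s₁ s₂) :
    TwinInterleaving Ha ((none, some b) :: sV) s₁ (b :: s₂) := by
  obtain ⟨hev, rfl, rfl⟩ := h
  exact ⟨by simpa [twinEvents, hb] using hev, rfl, rfl⟩

lemma cons_both {a b : E} {o : O} (ha : Ha a = some o) (hb : Ha b = some o)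
    (h : TwinInterleaving Ha sV s₁ s₂) :
    TwinInterleaving Ha ((some a, some b) :: sV) (a :: s₁) (b :: s₂) := by
  obtain ⟨hev, rfl, rfl⟩ := h
  exact ⟨by simpa [twinEvents, ha, hb] using hev, rfl, rfl⟩

end TwinInterleaving

lemma exists_twinInterleaving {s₁ s₂ : List E} (h : obs Ha s₁ = obs Ha s₂) :
    ∃ sV, TwinInterleaving Ha sV s₁ s₂ := by
  induction s₁ generalizing s₂ with
  | nil =>
    induction s₂ with
    | nil => exact ⟨[], .nil⟩
    | cons b s₂ ih =>
      cases hb : Ha b with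
      | none =>
        obtain ⟨sV, hsV⟩ := ih (by simpa [obs, hb] using h)
        exact ⟨_, hsV.cons_right hb⟩
      | some o => simp [obs, hb] at h
  | cons a s₁ ih₁ =>
    cases ha : Ha a with
    | none =>
      obtain ⟨sV, hsV⟩ := ih₁ (by simpa [obs, ha] using h)
      exact ⟨_, hsV.cons_left ha⟩
    | some o =>
      induction s₂ with
      | nil => simp [obs, ha] at h
      | cons b s₂ ih₂ =>
        cases hb : Ha b with
        | none =>
          obtain ⟨sV, hsV⟩ := ih₂ (by simpa [obs, hb] using h)
          exact ⟨_, hsV.cons_right hb⟩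
        | some o' =>
          obtain ⟨rfl, h'⟩ : o = o' ∧ obs Ha s₁ = obs Ha s₂ := by simpa [obs, ha, hb] using h
          obtain ⟨sV, hsV⟩ := ih₁ h'
          exact ⟨_, hsV.cons_both ha hb⟩

end Observation

/-- (i) Every string of L(V) projects to two strings of L(G) with the same
H_a-observation; (ii) conversely, any two strings of L(G) with the same
H_a-observation arise as the projections of some string of L(V). -/
theorem stmt_14 {Q E O : Type*} (T : PDFA Q E) (Ha : E → Option O) :
    (∀ sV : List (Option E × Option E), (∀ ev ∈ sV, ev ∈ twinEvents Ha) →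
       (twinRun T sV).isSome →
       sV.filterMap Prod.fst ∈ T.lang ∧ sV.filterMap Prod.snd ∈ T.lang ∧
       obs Ha (sV.filterMap Prod.fst) = obs Ha (sV.filterMap Prod.snd)) ∧
    (∀ s1 ∈ T.lang, ∀ s2 ∈ T.lang, obs Ha s1 = obs Ha s2 →
       ∃ sV : List (Option E × Option E),
         (∀ ev ∈ sV, ev ∈ twinEvents Ha) ∧ (twinRun T sV).isSome ∧
         sV.filterMap Prod.fst = s1 ∧ sV.filterMap Prod.snd = s2) := by
  refine ⟨fun sV hsV hrun => ?_, fun s₁ hs₁ s₂ hs₂ hobs => ?_⟩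
  · exact ⟨((twinRun_isSome_iff T sV).mp hrun).1, ((twinRun_isSome_iff T sV).mp hrun).2,
      obs_filterMap_fst_eq_snd Ha hsV⟩
  · obtain ⟨sV, hev, rfl, rfl⟩ := exists_twinInterleaving Ha hobs
    exact ⟨sV, hev, (twinRun_isSome_iff T sV).mpr ⟨hs₁, hs₂⟩, rfl, rfl⟩
end
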